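/- With the coefficients c_1 = 0, c_2 = 1/6, c_3 = -1/6, c_4 = 1/12, c_5 = -1/12 and b_1 = 71/5, b_2 = 117/10, b_3 = 7/10, b_4 = -104/5, b_5 = -24/5, one has \sum_{i=1}^5 b_i c_i^k = 1/(k+1)! for every k = 0, 1, 2, 3, 4; consequently r(x) = \sum_{i=1}^5 b_i/(1 - c_i x) satisfies r(x) - \varphi_1(x) = O(x^5) as x \to 0. -/

import Mathlib

/-- The entire function `φ₁(x) = ∑ₖ xᵏ / (k+1)!` (equal to `(eˣ - 1)/x` for `x ≠ 0`). -/
noncomputable def phi1R (x : ℝ) : ℝ :=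
  ∑' k : ℕ, x ^ k / ((k + 1).factorial : ℝ)

/-!
Expanding each `bᵢ / (1 - cᵢ x)` geometrically, `r - φ₁` is the power series with coefficients
`dₖ = ∑ᵢ bᵢ cᵢᵏ - 1/(k+1)!`. The moment conditions make `dₖ = 0` for `k ≤ 4`, and `|cᵢ| ≤ 1/2`
together with `(k+1)! ≥ 2ᵏ` gives `|dₖ| ≤ (∑ᵢ |bᵢ| + 1) 2⁻ᵏ`, so for `|x| < 1` the series is
dominated termwise by a geometric series times `|x|⁵`.
-/

open Finset

lemma one_div_factorial_succ_le_half_pow (k : ℕ) :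
    1 / ((k + 1).factorial : ℝ) ≤ (1 / 2) ^ k := by
  have h : 2 ^ k ≤ (k + 1).factorial := by
    simpa [Nat.add_comm] using Nat.factorial_mul_pow_le_factorial (m := 1) (n := k)
  rw [one_div_pow]
  exact one_div_le_one_div_of_le (by positivity) (by exact_mod_cast h)

lemma hasSum_phi1R (x : ℝ) :
    HasSum (fun k : ℕ => x ^ k / ((k + 1).factorial : ℝ)) (phi1R x) := by
  refine (Summable.of_norm_bounded (Real.summable_pow_div_factorial |x|) fun k => ?_).hasSum
  rw [Real.norm_eq_abs, abs_div, abs_pow, Nat.abs_cast]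
  exact div_le_div_of_nonneg_left (by positivity) (by positivity)
    (by exact_mod_cast Nat.factorial_le k.le_succ)

section SumOfGeometric

variable {ι : Type*} (s : Finset ι) (b c : ι → ℝ)

lemma hasSum_sum_div_one_sub_mul {x : ℝ} (hcx : ∀ i ∈ s, |c i * x| < 1) :
    HasSum (fun k : ℕ => (∑ i ∈ s, b i * c i ^ k) * x ^ k) (∑ i ∈ s, b i / (1 - c i * x)) := by
  simp only [sum_mul, mul_assoc, ← mul_pow, div_eq_mul_inv]
  exact hasSum_sum fun i hi => (hasSum_geometric_of_abs_lt_one (hcx i hi)).mul_left (b i)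

lemma hasSum_sum_div_one_sub_mul_sub_phi1R {x : ℝ} (hcx : ∀ i ∈ s, |c i * x| < 1) :
    HasSum (fun k : ℕ => (∑ i ∈ s, b i * c i ^ k - 1 / ((k + 1).factorial : ℝ)) * x ^ k)
      ((∑ i ∈ s, b i / (1 - c i * x)) - phi1R x) := by
  have e : ∀ k : ℕ, (∑ i ∈ s, b i * c i ^ k - 1 / ((k + 1).factorial : ℝ)) * x ^ k =
      (∑ i ∈ s, b i * c i ^ k) * x ^ k - x ^ k / ((k + 1).factorial : ℝ) := fun k => by ring
  simpa only [e] using (hasSum_sum_div_one_sub_mul s b c hcx).sub (hasSum_phi1R x)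

lemma abs_sum_mul_pow_le {ρ : ℝ} (hc : ∀ i ∈ s, |c i| ≤ ρ) (k : ℕ) :
    |∑ i ∈ s, b i * c i ^ k| ≤ (∑ i ∈ s, |b i|) * ρ ^ k := by
  rw [sum_mul]
  refine (abs_sum_le_sum_abs _ _).trans (sum_le_sum fun i hi => ?_)
  rw [abs_mul, abs_pow]
  exact mul_le_mul_of_nonneg_left (pow_le_pow_left₀ (abs_nonneg _) (hc i hi) k) (abs_nonneg _)

lemma abs_sum_mul_pow_sub_one_div_factorial_le (hc : ∀ i ∈ s, |c i| ≤ 1 / 2) (k : ℕ) :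
    |∑ i ∈ s, b i * c i ^ k - 1 / ((k + 1).factorial : ℝ)| ≤
      (∑ i ∈ s, |b i| + 1) * (1 / 2) ^ k :=
  calc |∑ i ∈ s, b i * c i ^ k - 1 / ((k + 1).factorial : ℝ)|
      ≤ |∑ i ∈ s, b i * c i ^ k| + |1 / ((k + 1).factorial : ℝ)| := abs_sub _ _
    _ ≤ (∑ i ∈ s, |b i|) * (1 / 2) ^ k + (1 / 2) ^ k := by
      rw [abs_of_nonneg (a := 1 / _) (by positivity)]
      exact add_le_add (abs_sum_mul_pow_le s b c hc k) (one_div_factorial_succ_le_half_pow k)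
    _ = (∑ i ∈ s, |b i| + 1) * (1 / 2) ^ k := by ring

end SumOfGeometric

lemma abs_le_of_hasSum_mul_pow {d : ℕ → ℝ} {n : ℕ} {M r x s : ℝ} (hr₀ : 0 ≤ r) (hr : r < 1)
    (hd : ∀ k, |d k| ≤ M * r ^ k) (hlow : ∀ k < n, d k = 0) (hx : |x| ≤ 1)
    (hs : HasSum (fun k => d k * x ^ k) s) : |s| ≤ M / (1 - r) * |x| ^ n := by
  have hgeo : HasSum (fun k => M * r ^ k * |x| ^ n) (M / (1 - r) * |x| ^ n) := by
    simpa only [div_eq_mul_inv] using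
      ((hasSum_geometric_of_lt_one hr₀ hr).mul_left M).mul_right (|x| ^ n)
  refine hs.norm_le_of_bounded hgeo fun k => ?_
  have hMr : 0 ≤ M * r ^ k := (abs_nonneg _).trans (hd k)
  rcases lt_or_ge k n with hk | hk
  · simp only [hlow k hk, zero_mul, norm_zero]
    positivity
  · rw [Real.norm_eq_abs, abs_mul, abs_pow]
    exact mul_le_mul (hd k) (pow_le_pow_of_le_one (abs_nonneg x) hx hk) (by positivity) hMr

/-- With `c = (0, 1/6, -1/6, 1/12, -1/12)` and
`b = (71/5, 117/10, 7/10, -104/5, -24/5)`, the coefficients satisfy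
`∑ᵢ bᵢ cᵢᵏ = 1/(k+1)!` for `k = 0, …, 4`, and hence
`r(x) = ∑ᵢ bᵢ/(1 - cᵢ x)` approximates `φ₁` to order 4 at the origin. -/
theorem fractional_phi1_order4_optimized_coeffs :
    let c : Fin 5 → ℝ := ![0, 1/6, -1/6, 1/12, -1/12]
    let b : Fin 5 → ℝ := ![71/5, 117/10, 7/10, -104/5, -24/5]
    (∀ k : ℕ, k ≤ 4 → ∑ i, b i * c i ^ k = 1 / ((k + 1).factorial : ℝ)) ∧
      ∃ C > (0 : ℝ), ∃ δ > (0 : ℝ), ∀ x : ℝ, |x| < δ →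
        |(∑ i, b i / (1 - c i * x)) - phi1R x| ≤ C * |x| ^ 5 := by
  intro c b
  have hcoef : ∀ k : ℕ, k ≤ 4 → ∑ i, b i * c i ^ k = 1 / ((k + 1).factorial : ℝ) := by
    intro k hk
    interval_cases k <;>
      · simp only [Fin.sum_univ_five, b, c, Matrix.cons_val_zero, Matrix.cons_val_one,
          Matrix.cons_val_two, Matrix.cons_val_three, Matrix.cons_val_four, Matrix.head_cons,
          Matrix.tail_cons]
        norm_num [Nat.factorial]
  have hc : ∀ i ∈ univ, |c i| ≤ 1 / 2 := by
    intro i _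
    fin_cases i <;> norm_num [c, abs_le]
  refine ⟨hcoef, (∑ i, |b i| + 1) / (1 - 1 / 2), by positivity, 1, one_pos, fun x hx => ?_⟩
  have hcx : ∀ i ∈ univ, |c i * x| < 1 := fun i hi => by
    rw [abs_mul]
    nlinarith [hc i hi, abs_nonneg (c i), abs_nonneg x]
  exact abs_le_of_hasSum_mul_pow (by norm_num) (by norm_num)
    (abs_sum_mul_pow_sub_one_div_factorial_le univ b c hc)
    (fun k hk => by rw [hcoef k (by omega), sub_self]) hx.le
    (hasSum_sum_div_one_sub_mul_sub_phi1R univ b c hcx)
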